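/- arXiv:0706.3423 — 2 statements merged into one kernel-verified Lean document; each statement's English description precedes it below -/
import Mathlib

section
/- Let A, B, C be pairwise disjoint finite sets and let σ be a fixed-point-free involution of the union A ∪ B ∪ C such that for every element x of the union, x and σ(x) never lie in the same one of the three sets A, B, C (i.e., σ pairs each element with an element of a different set). Then the cardinalities N₁ = |A|, N₂ = |B|, N₃ = |C| satisfy the triangle inequalities N₁ ≤ N₂ + N₃, N₂ ≤ N₁ + N₃, N₃ ≤ N₁ + N₂, and moreover the total N₁ + N₂ + N₃ is even. -/
/-!
The involution `σ` is injective, and it sends each of the three sets into the union of the other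
two, which gives the triangle inequalities. Since `σ` has no fixed points, it splits the disjoint
union `A ∪ B ∪ C` into pairs `{x, σ x}`, so the total count is even.
-/

open Finset

theorem Finset.even_card_of_involution {α : Type*} {s : Finset α} (σ : α → α)
    (hmaps : ∀ x ∈ s, σ x ∈ s) (hinv : ∀ x ∈ s, σ (σ x) = x) (hfpf : ∀ x ∈ s, σ x ≠ x) :
    Even #s := by
  rw [← ZMod.natCast_eq_zero_iff_even, card_eq_sum_ones, Nat.cast_sum, Nat.cast_one]
  exact sum_involution (fun x _ => σ x) (fun _ _ => by decide) (fun x hx _ => hfpf x hx)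
    hmaps hinv

theorem Finset.card_le_card_add_card_of_involution {α : Type*} [DecidableEq α]
    {X Y Z : Finset α} (σ : α → α) (hinv : ∀ x ∈ X, σ (σ x) = x)
    (hmaps : ∀ x ∈ X, σ x ∈ Y ∪ Z) : #X ≤ #Y + #Z :=
  (card_le_card_of_injOn σ hmaps (Set.LeftInvOn.injOn hinv)).trans (card_union_le Y Z)

/-- If `A`, `B`, `C` are pairwise disjoint finite sets and `σ` is a fixed-point-free
involution of `A ∪ B ∪ C` that always pairs an element of one of the three sets with
an element of a *different* one of the three sets, then the cardinalities satisfy the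
triangle inequalities and their sum is even. -/
theorem stmt0 {α : Type*} [DecidableEq α] (A B C : Finset α)
    (hAB : Disjoint A B) (hAC : Disjoint A C) (hBC : Disjoint B C)
    (σ : α → α)
    (hmaps : ∀ x ∈ A ∪ B ∪ C, σ x ∈ A ∪ B ∪ C)
    (hinv : ∀ x ∈ A ∪ B ∪ C, σ (σ x) = x)
    (hfpf : ∀ x ∈ A ∪ B ∪ C, σ x ≠ x)
    (hdiff : ∀ x ∈ A ∪ B ∪ C,
      ¬(x ∈ A ∧ σ x ∈ A) ∧ ¬(x ∈ B ∧ σ x ∈ B) ∧ ¬(x ∈ C ∧ σ x ∈ C)) :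
    A.card ≤ B.card + C.card ∧ B.card ≤ A.card + C.card ∧
      C.card ≤ A.card + B.card ∧ Even (A.card + B.card + C.card) := by
  have hA : A ⊆ A ∪ B ∪ C := subset_union_left.trans subset_union_left
  have hB : B ⊆ A ∪ B ∪ C := subset_union_right.trans subset_union_left
  have hC : C ⊆ A ∪ B ∪ C := subset_union_right
  have hother : (∀ x ∈ A, σ x ∈ B ∪ C) ∧ (∀ x ∈ B, σ x ∈ A ∪ C) ∧ (∀ x ∈ C, σ x ∈ A ∪ B) := by
    refine ⟨fun x hx => ?_, fun x hx => ?_, fun x hx => ?_⟩ <;>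
    · have hxU : x ∈ A ∪ B ∪ C := by simp [hx]
      have := hmaps x hxU
      have := hdiff x hxU
      simp only [mem_union] at *
      tauto
  have hcard : #(A ∪ B ∪ C) = #A + #B + #C := by
    rw [card_union_of_disjoint (disjoint_union_left.2 ⟨hAC, hBC⟩), card_union_of_disjoint hAB]
  refine ⟨?_, ?_, ?_, hcard ▸ even_card_of_involution σ hmaps hinv hfpf⟩
  · exact card_le_card_add_card_of_involution σ (fun x hx => hinv x (hA hx)) hother.1
  · exact card_le_card_add_card_of_involution σ (fun x hx => hinv x (hB hx)) hother.2.1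
  · exact card_le_card_add_card_of_involution σ (fun x hx => hinv x (hC hx)) hother.2.2
end

section
/- Let A, B, C be pairwise disjoint finite sets whose cardinalities N₁ = |A|, N₂ = |B|, N₃ = |C| satisfy the triangle inequalities N₁ ≤ N₂ + N₃, N₂ ≤ N₁ + N₃, N₃ ≤ N₁ + N₂ and have even sum N₁ + N₂ + N₃. Then there exists a fixed-point-free involution σ of A ∪ B ∪ C such that for every element x, the elements x and σ(x) lie in different sets among A, B, C. -/
/-!
Induct on `#A + #B + #C`. If `C` is the smallest set, remove one element from each of `A` and `B`
and pair them with each other: the triangle inequalities survive because `#C ≤ #A + #B - 2`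
follows from minimality of `C` and the parity of the sum, and the remaining sets are paired by
induction.
-/

open Finset

section

variable {α : Type*} [DecidableEq α]

def IsCrossPairing (A B C : Finset α) (σ : α → α) : Prop :=
  (∀ x ∈ A ∪ B ∪ C, σ x ∈ A ∪ B ∪ C) ∧
    (∀ x ∈ A ∪ B ∪ C, σ (σ x) = x) ∧
    (∀ x ∈ A ∪ B ∪ C, σ x ≠ x) ∧
    (∀ x ∈ A ∪ B ∪ C,
      ¬(x ∈ A ∧ σ x ∈ A) ∧ ¬(x ∈ B ∧ σ x ∈ B) ∧ ¬(x ∈ C ∧ σ x ∈ C))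

namespace IsCrossPairing

variable {A B C : Finset α} {σ : α → α}

theorem swap_left (h : IsCrossPairing A B C σ) : IsCrossPairing B A C σ := by
  simp only [IsCrossPairing, mem_union] at *
  grind

theorem swap_right (h : IsCrossPairing A B C σ) : IsCrossPairing A C B σ := by
  simp only [IsCrossPairing, mem_union] at *
  grind

theorem of_erase {a b : α} (hAB : Disjoint A B) (hAC : Disjoint A C) (hBC : Disjoint B C)
    (ha : a ∈ A) (hb : b ∈ B) (h : IsCrossPairing (A.erase a) (B.erase b) C σ) :
    IsCrossPairing A B C (fun x => if x = a then b else if x = b then a else σ x) := by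
  have haB : a ∉ B := disjoint_left.1 hAB ha
  have haC : a ∉ C := disjoint_left.1 hAC ha
  have hbA : b ∉ A := disjoint_right.1 hAB hb
  have hbC : b ∉ C := disjoint_left.1 hBC hb
  simp only [IsCrossPairing, mem_union, mem_erase] at *
  grind

theorem empty (σ : α → α) : IsCrossPairing ∅ ∅ ∅ σ := by
  simp [IsCrossPairing]

end IsCrossPairing

end

/-- If the cardinalities of three pairwise disjoint finite sets satisfy the triangle
inequalities and have even sum, then there is a fixed-point-free involution of the
union pairing each element with an element of a different one of the three sets. -/
theorem stmt4 {α : Type*} [DecidableEq α] (A B C : Finset α)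
    (hAB : Disjoint A B) (hAC : Disjoint A C) (hBC : Disjoint B C)
    (h₁ : A.card ≤ B.card + C.card) (h₂ : B.card ≤ A.card + C.card)
    (h₃ : C.card ≤ A.card + B.card)
    (heven : Even (A.card + B.card + C.card)) :
    ∃ σ : α → α,
      (∀ x ∈ A ∪ B ∪ C, σ x ∈ A ∪ B ∪ C) ∧
      (∀ x ∈ A ∪ B ∪ C, σ (σ x) = x) ∧
      (∀ x ∈ A ∪ B ∪ C, σ x ≠ x) ∧
      (∀ x ∈ A ∪ B ∪ C,
        ¬(x ∈ A ∧ σ x ∈ A) ∧ ¬(x ∈ B ∧ σ x ∈ B) ∧ ¬(x ∈ C ∧ σ x ∈ C)) := by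
  show ∃ σ, IsCrossPairing A B C σ
  rw [Nat.even_iff] at heven
  induction hn : #A + #B + #C using Nat.strong_induction_on generalizing A B C with
  | _ n ih =>
  rcases n.eq_zero_or_pos with rfl | hpos
  · obtain ⟨rfl, rfl, rfl⟩ : A = ∅ ∧ B = ∅ ∧ C = ∅ := by simp_all
    exact ⟨id, .empty id⟩
  wlog hC : #C ≤ #A ∧ #C ≤ #B generalizing A B C
  · by_cases hB : #B ≤ #A ∧ #B ≤ #C
    · obtain ⟨σ, hσ⟩ := this A C B hAC hAB hBC.symm (by omega) (by omega) (by omega) (by omega)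
        (by omega) (by omega)
      exact ⟨σ, hσ.swap_right⟩
    · obtain ⟨σ, hσ⟩ := this B C A hBC hAB.symm hAC.symm (by omega) (by omega) (by omega)
        (by omega) (by omega) (by omega)
      exact ⟨σ, hσ.swap_right.swap_left⟩
  obtain ⟨a, ha⟩ : A.Nonempty := card_pos.1 (by omega)
  obtain ⟨b, hb⟩ : B.Nonempty := card_pos.1 (by omega)
  have hcardA := card_erase_of_mem ha
  have hcardB := card_erase_of_mem hb
  obtain ⟨σ, hσ⟩ := ih (n - 2) (by omega) (A.erase a) (B.erase b) C
    (hAB.mono (erase_subset a A) (erase_subset b B)) (hAC.mono_left (erase_subset a A))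
    (hBC.mono_left (erase_subset b B)) (by omega) (by omega) (by omega) (by omega) (by omega)
  exact ⟨_, hσ.of_erase hAB hAC hBC ha hb⟩
end
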